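/- Let A be a finite commutative unital ring, let (a,b,x) ∈ A³ and let n ≥ 3 be an integer. If the n-tuple (a, x, x, …, x, b) ∈ A^n (whose first entry is a, whose last entry is b, and whose n−2 middle entries all equal x) is a λ-quiddity over A, then a = b and a·(a − x) = 0. -/

import Mathlib

namespace Quiddity

variable {A : Type*} [CommRing A]

/-- `mMat [a₁, …, aₙ]` is the matrix product `[[aₙ,-1],[1,0]] ⋯ [[a₁,-1],[1,0]]`. -/
def mMat : List A → Matrix (Fin 2) (Fin 2) A
  | [] => 1
  | a :: t => mMat t * !![a, -1; 1, 0]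

/-- Continuant: `cont [] = K₀ = 1`, `cont [a] = K₁(a) = a`, and the continuant recursion. -/
def cont : List A → A
  | [] => 1
  | [a] => a
  | a :: b :: t => a * cont (b :: t) - cont t

/-- A λ-quiddity is a tuple with `Mₙ(a₁,…,aₙ) = ± Id`. -/
def IsQuiddity (l : List A) : Prop := mMat l = 1 ∨ mMat l = -1

/-- The sum `⊕` of two tuples (meaningful for tuples of length ≥ 2):
`(a₁,…,aₘ) ⊕ (b₁,…,b_l) = (a₁+b_l, a₂,…,a_{m−1}, aₘ+b₁, b₂,…,b_{l−1})`. -/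
def oplus (la lb : List A) : List A :=
  (la.headD 0 + lb.getLastD 0) ::
    (la.tail.dropLast ++ (la.getLastD 0 + lb.headD 0) :: lb.tail.dropLast)

/-- Two tuples are equivalent if one is a cyclic permutation of the other or of its
reversal. -/
def TupleEquiv (l l' : List A) : Prop :=
  List.IsRotated l l' ∨ List.IsRotated l.reverse l'

/-- A λ-quiddity `c` is reducible if `c ∼ a ⊕ b` with `b` a λ-quiddity and both of size ≥ 3. -/
def QuiddityReducible (c : List A) : Prop :=
  ∃ a b : List A, 3 ≤ a.length ∧ 3 ≤ b.length ∧ IsQuiddity b ∧ TupleEquiv c (oplus a b)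

/-- `(a, b, a, b, …, a, b)` with `k` repetitions of the pair `(a, b)` (size `2k`). -/
def dynList : ℕ → A → A → List A
  | 0, _, _ => []
  | k + 1, a, b => a :: b :: dynList k a b

/-- `(u, v, v, u, v, v, …, u, v, v)` with `k` repetitions of the block `(u, v, v)`
(size `3k`). -/
def triList : ℕ → A → A → List A
  | 0, _, _ => []
  | k + 1, a, b => a :: b :: b :: triList k a b

end Quiddity

open Quiddity

/-!
Write `E c = !![c, -1; 1, 0]`, so that `M(a, x, …, x, b) = E b · E x ^ (n - 2) · E a`.
Every power of `E x` has the shape `!![p, -q; q, p - x * q]`, and multiplying out shows that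
`M = ±1` forces `p = ∓1`, `q = p * a = p * b` and, from the upper-left entry, `q * (x - a) = 0`.
As `p` is a unit, this gives `a = b` and `a * (a - x) = 0`.
-/

namespace Quiddity

variable {A : Type*} [CommRing A]

theorem mMat_append (l₁ l₂ : List A) : mMat (l₁ ++ l₂) = mMat l₂ * mMat l₁ := by
  induction l₁ with
  | nil => simp [mMat]
  | cons c t ih => simp [mMat, ih, mul_assoc]

theorem mMat_replicate (x : A) (m : ℕ) :
    mMat (List.replicate m x) = !![x, -1; 1, 0] ^ m := by
  induction m with
  | zero => simp [mMat]
  | succ k ih => rw [List.replicate_succ', mMat_append, ih, pow_succ']; simp [mMat]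

theorem IsQuiddity.exists_eq_smul_one {l : List A} (h : IsQuiddity l) :
    ∃ s : A, s * s = 1 ∧ mMat l = s • 1 := by
  rcases h with h | h
  · exact ⟨1, mul_one 1, by rw [h, one_smul]⟩
  · exact ⟨-1, by ring, by rw [h, neg_smul, one_smul]⟩

theorem exists_pow_eq (x : A) (m : ℕ) :
    ∃ p q : A, !![x, -1; 1, 0] ^ m = !![p, -q; q, p - x * q] := by
  induction m with
  | zero => exact ⟨1, 0, by simp [Matrix.one_fin_two]⟩
  | succ k ih =>
    obtain ⟨p, q, hpow⟩ := ih
    refine ⟨p * x - q, p, ?_⟩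
    rw [pow_succ, hpow, Matrix.mul_fin_two]
    ext i j
    fin_cases i <;> fin_cases j <;> simp <;> ring

theorem exists_mMat_cons_replicate_append (a b x : A) (m : ℕ) :
    ∃ p q : A, mMat (a :: (List.replicate m x ++ [b])) =
      !![b * (p * a - q) - q * a - p + x * q, q - b * p; p * a - q, -p] := by
  obtain ⟨p, q, hpow⟩ := exists_pow_eq x m
  refine ⟨p, q, ?_⟩
  rw [mMat, mMat_append, mMat_replicate, hpow]
  simp only [mMat, one_mul, Matrix.mul_fin_two]
  ext i j
  fin_cases i <;> fin_cases j <;> simp <;> ring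

end Quiddity

theorem stmt5_general (A : Type*) [CommRing A] (a b x : A) (n : ℕ)
    (h : IsQuiddity (a :: (List.replicate (n - 2) x ++ [b]))) :
    a = b ∧ a * (a - x) = 0 := by
  obtain ⟨s, hs, hM⟩ := h.exists_eq_smul_one
  obtain ⟨p, q, hpq⟩ := exists_mMat_cons_replicate_append a b x (n - 2)
  rw [hpq] at hM
  simp only [← Matrix.ext_iff, Fin.forall_fin_two, Matrix.of_apply, Matrix.cons_val',
    Matrix.cons_val_zero, Matrix.cons_val_one, Matrix.cons_val_fin_one, Matrix.smul_apply,
    smul_eq_mul, Matrix.one_apply_eq, Matrix.one_apply_ne, ne_eq, zero_ne_one, one_ne_zero,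
    not_false_eq_true, mul_one, mul_zero] at hM
  obtain ⟨⟨h00, h01⟩, h10, h11⟩ := hM
  have hp : p * p = 1 := by linear_combination (s - p) * h11 + hs
  constructor
  · linear_combination p * h10 + p * h01 + (b - a) * hp
  · linear_combination -p * (h00 - b * h10 - h11) - p * (x - a) * h10 + a * (x - a) * hp

/-- if `(a, x, …, x, b)` (with `n − 2` middle entries equal to `x`, `n ≥ 3`)
is a λ-quiddity over a finite commutative ring, then `a = b` and `a·(a − x) = 0`. -/
theorem stmt5 (A : Type*) [CommRing A] [Fintype A] (a b x : A) (n : ℕ) (hn : 3 ≤ n)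
    (h : IsQuiddity (a :: (List.replicate (n - 2) x ++ [b]))) :
    a = b ∧ a * (a - x) = 0 :=
  stmt5_general A a b x n h
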